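/- arXiv:math/0401067 — 8 statements merged into one kernel-verified Lean document; each statement's English description precedes it below -/
import Mathlib

section
/- The language of words over the alphabet {a,b,c} that contain as many a's as b's, as many a's as c's, and every prefix of which contains no more b's than a's and no more c's than a's, is not a context-free language. -/
/-- The language over the alphabet {a,b,c} (encoded as `Fin 3`, with `a = 0`, `b = 1`,
`c = 2`) of words with as many a's as b's, as many a's as c's, and every prefix of which
contains no more b's than a's and no more c's than a's. -/
def krewerasLanguage : Language (Fin 3) :=
  {w | w.count 1 = w.count 0 ∧ w.count 2 = w.count 0 ∧
    ∀ u : List (Fin 3), u <+: w → u.count 1 ≤ u.count 0 ∧ u.count 2 ≤ u.count 0}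

/-!
The pumping lemma for context-free languages is proved with parse trees. A tree in which no
nonterminal reappears below itself has yield of length at most `K ^ n`, where `K` bounds the
lengths of right-hand sides and `n` is the number of nonterminals. So in a parse tree of minimal
size for a longer word there is a lowest subtree with yield longer than `K ^ n`, of yield
length at most `K ^ (n + 1)`, containing a nonterminal `A` below an occurrence of itself; this
splits the word as `u v x y z` with `A ⇒* v A y` and `A ⇒* x`, and `v y ≠ []` by minimality.

For `aᵖ bᵖ cᵖ` with `p` larger than the pumping length, pumping down to `u x z` keeps the word in
the language, so `v y` has as many a's as b's as c's and, being nonempty, contains an `a` and a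
`c`. But a window `v x y` of length less than `p` cannot reach from the a's to the c's.
-/

open List

def List.pump {α : Type*} (u v x y z : List α) (i : ℕ) : List α :=
  u ++ (replicate i v).flatten ++ x ++ (replicate i y).flatten ++ z

namespace ContextFreeGrammar

variable {T : Type*} {g : ContextFreeGrammar T}

theorem Derives.append {u v u' v' : List (Symbol T g.NT)} (h : g.Derives u v)
    (h' : g.Derives u' v') : g.Derives (u ++ u') (v ++ v') :=
  (h.append_right u').trans (h'.append_left v)

theorem derives_flatMap {α : Type*} {l : List α} {f f' : α → List (Symbol T g.NT)}
    (h : ∀ a ∈ l, g.Derives (f a) (f' a)) : g.Derives (l.flatMap f) (l.flatMap f') := by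
  induction l with
  | nil => exact Derives.refl _
  | cons a l ih =>
    simpa using (h a mem_cons_self).append (ih fun b hb => h b (mem_cons_of_mem a hb))

theorem Derives.pump {A : g.NT} {v x y : List (Symbol T g.NT)}
    (hloop : g.Derives [.nonterminal A] (v ++ [.nonterminal A] ++ y))
    (hx : g.Derives [.nonterminal A] x) (i : ℕ) :
    g.Derives [.nonterminal A] ((replicate i v).flatten ++ x ++ (replicate i y).flatten) := by
  induction i with
  | zero => simpa using hx
  | succ i ih =>
    have := hloop.trans ((ih.append_left v).append_right y)
    rw [replicate_succ, replicate_succ', flatten_cons, flatten_append, flatten_singleton]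
    simpa only [append_assoc] using this

-- Trees are not tied to a grammar: `IsValid g` checks that every node applies a rule of `g` to
-- the roots of its children.
inductive ParseTree (T N : Type*) where
  | leaf (t : T)
  | node (r : ContextFreeRule T N) (children : List (ParseTree T N))

namespace ParseTree

variable {N : Type*}

def root : ParseTree T N → Symbol T N
  | leaf t => .terminal t
  | node r _ => .nonterminal r.input

@[simp] theorem root_leaf (t : T) : (leaf t : ParseTree T N).root = .terminal t := rfl

@[simp] theorem root_node (r : ContextFreeRule T N) (c : List (ParseTree T N)) :
    (node r c).root = .nonterminal r.input := rfl

@[simp]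
def yield : ParseTree T N → List T
  | leaf t => [t]
  | node _ c => c.flatMap yield

def size : ParseTree T N → ℕ
  | leaf _ => 1
  | node _ c => (c.map size).sum + 1

def nonterminals : ParseTree T N → List N
  | leaf _ => []
  | node r c => r.input :: c.flatMap nonterminals

inductive IsValid (g : ContextFreeGrammar T) : ParseTree T g.NT → Prop
  | leaf (t : T) : IsValid g (leaf t)
  | node {r : ContextFreeRule T g.NT} {c : List (ParseTree T g.NT)} (hr : r ∈ g.rules)
      (hc : c.map root = r.output) (hs : ∀ s ∈ c, IsValid g s) : IsValid g (node r c)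

def IsMinimal (g : ContextFreeGrammar T) (t : ParseTree T g.NT) : Prop :=
  ∀ t', IsValid g t' → t'.root = t.root → t'.yield = t.yield → t.size ≤ t'.size

def Pumps (g : ContextFreeGrammar T) (t : ParseTree T g.NT) (u v x y z : List T) : Prop :=
  t.yield = u ++ v ++ x ++ y ++ z ∧ v ++ y ≠ [] ∧
    ∀ i, g.Derives [t.root] ((pump u v x y z i).map .terminal)

theorem size_lt_of_mem {r : ContextFreeRule T N} {c : List (ParseTree T N)} {s : ParseTree T N}
    (hs : s ∈ c) : s.size < (node r c).size := by
  have := le_sum_of_mem (mem_map_of_mem (f := size) hs)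
  simp only [size]
  omega

theorem derives_map_root {c : List (ParseTree T g.NT)}
    (h : ∀ s ∈ c, g.Derives [s.root] (s.yield.map .terminal)) :
    g.Derives (c.map root) ((c.flatMap yield).map .terminal) := by
  rw [map_eq_flatMap, map_flatMap]
  exact derives_flatMap h

theorem IsValid.derives {t : ParseTree T g.NT} (ht : IsValid g t) :
    g.Derives [t.root] (t.yield.map .terminal) := by
  induction ht with
  | leaf a => simpa using Derives.refl _
  | @node r c hr hc _ ih =>
    have hstep : g.Produces [.nonterminal r.input] (c.map root) :=
      ⟨r, hr, hc ▸ ContextFreeRule.Rewrites.input_output⟩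
    simpa using hstep.trans_derives (derives_map_root ih)

theorem exists_forest_of_derives {α : List (Symbol T g.NT)} {w : List T}
    (h : g.Derives α (w.map .terminal)) :
    ∃ c : List (ParseTree T g.NT), (∀ s ∈ c, IsValid g s) ∧ c.map root = α ∧
      c.flatMap yield = w := by
  induction h using Relation.ReflTransGen.head_induction_on with
  | refl =>
    exact ⟨w.map leaf, by simpa using fun a _ => IsValid.leaf a, by simp [Function.comp_def],
      by rw [flatMap_map]; simp⟩
  | head hstep _ ih =>
    obtain ⟨c, hc, hroots, rfl⟩ := ih
    obtain ⟨r, hr, hrw⟩ := hstep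
    obtain ⟨p, q, rfl, rfl⟩ := hrw.exists_parts
    obtain ⟨c', c₂, rfl, hc', rfl⟩ := map_eq_append_iff.mp hroots
    obtain ⟨c₁, cₘ, rfl, rfl, hm⟩ := map_eq_append_iff.mp hc'
    refine ⟨c₁ ++ [node r cₘ] ++ c₂, ?_, by simp [root], by simp⟩
    simp only [mem_append, mem_singleton] at hc ⊢
    rintro s ((hs | rfl) | hs)
    · exact hc s (.inl (.inl hs))
    · exact .node hr hm fun s hs => hc s (.inl (.inr hs))
    · exact hc s (.inr hs)

theorem exists_isValid_of_mem_language {w : List T} (hw : w ∈ g.language) :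
    ∃ t : ParseTree T g.NT, IsValid g t ∧ t.root = .nonterminal g.initial ∧ t.yield = w := by
  obtain ⟨c, hc, hroot, rfl⟩ := exists_forest_of_derives hw
  obtain ⟨t, rfl, ht⟩ := map_eq_singleton_iff.mp hroot
  exact ⟨t, hc t mem_cons_self, ht, by simp⟩

theorem IsValid.exists_isMinimal {t : ParseTree T g.NT} (ht : IsValid g t) :
    ∃ t', IsValid g t' ∧ t'.root = t.root ∧ t'.yield = t.yield ∧ IsMinimal g t' := by
  obtain ⟨t', ⟨ht', hroot, hyield⟩, hmin⟩ := (measure size).wf.has_min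
    {t' | IsValid g t' ∧ t'.root = t.root ∧ t'.yield = t.yield} ⟨t, ht, rfl, rfl⟩
  refine ⟨t', ht', hroot, hyield, fun s hs hsroot hsyield => ?_⟩
  exact not_lt.mp (hmin s ⟨hs, hsroot.trans hroot, hsyield.trans hyield⟩)

section Child

variable {r : ContextFreeRule T g.NT} {c₁ c₂ : List (ParseTree T g.NT)} {s : ParseTree T g.NT}

theorem IsValid.derives_of_child (h : IsValid g (.node r (c₁ ++ s :: c₂)))
    {β : List (Symbol T g.NT)} (hs : g.Derives [s.root] β) :
    g.Derives [.nonterminal r.input]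
      ((c₁.flatMap yield).map .terminal ++ β ++ (c₂.flatMap yield).map .terminal) := by
  rcases h with _ | ⟨hr, hc, hc'⟩
  have hstep : g.Produces [.nonterminal r.input] (c₁.map root ++ [s.root] ++ c₂.map root) :=
    ⟨r, hr, by
      rw [append_assoc, singleton_append, ← map_cons, ← map_append, hc]; exact .input_output⟩
  refine hstep.trans_derives (((derives_map_root ?_).append hs).append (derives_map_root ?_)) <;>
    exact fun t ht => (hc' t (by simp [ht])).derives

theorem IsMinimal.of_child (h : IsValid g (.node r (c₁ ++ s :: c₂)))
    (hmin : IsMinimal g (.node r (c₁ ++ s :: c₂))) : IsMinimal g s := by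
  intro s' hs' hroot hyield
  by_contra! hlt
  rcases h with _ | ⟨hr, hc, hc'⟩
  have hvalid : IsValid g (.node r (c₁ ++ s' :: c₂)) := by
    refine .node hr (by simpa [hroot] using hc) fun t ht => ?_
    simp only [mem_append, mem_cons] at ht
    rcases ht with ht | rfl | ht
    · exact hc' t (by simp [ht])
    · exact hs'
    · exact hc' t (by simp [ht])
  have := hmin _ hvalid rfl (by simp [hyield])
  simp only [size, map_append, map_cons, sum_append, sum_cons] at this
  omega

theorem Pumps.of_child (h : IsValid g (.node r (c₁ ++ s :: c₂))) {u v x y z : List T}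
    (hs : Pumps g s u v x y z) :
    Pumps g (.node r (c₁ ++ s :: c₂)) (c₁.flatMap yield ++ u) v x y
      (z ++ c₂.flatMap yield) := by
  obtain ⟨hyield, hvy, hder⟩ := hs
  refine ⟨by simp [hyield], hvy, fun i => ?_⟩
  simpa [pump] using h.derives_of_child (hder i)

end Child

theorem IsValid.exists_subtree {t : ParseTree T g.NT} (ht : IsValid g t) {B : g.NT}
    (hB : B ∈ t.nonterminals) :
    ∃ s v y, IsValid g s ∧ s.root = .nonterminal B ∧ s.size ≤ t.size ∧
      t.yield = v ++ s.yield ++ y ∧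
      g.Derives [t.root] (v.map .terminal ++ [.nonterminal B] ++ y.map .terminal) := by
  induction ht with
  | leaf => simp [nonterminals] at hB
  | @node r c hr hc hc' ih =>
    simp only [nonterminals, mem_cons, mem_flatMap] at hB
    rcases hB with rfl | ⟨s', hs', hB⟩
    · exact ⟨_, [], [], .node hr hc hc', rfl, le_rfl, by simp, by simpa using Derives.refl _⟩
    obtain ⟨s, v, y, hs, hsroot, hsize, hyield, hder⟩ := ih s' hs' hB
    have hsize' := size_lt_of_mem (r := r) hs'
    obtain ⟨c₁, c₂, rfl⟩ := append_of_mem hs'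
    refine ⟨s, c₁.flatMap yield ++ v, y ++ c₂.flatMap yield, hs, hsroot, by omega,
      by simp [hyield], ?_⟩
    simpa using (IsValid.node hr hc hc').derives_of_child hder

theorem IsValid.mem_of_mem_nonterminals {F : Finset g.NT} (hF : ∀ r ∈ g.rules, r.input ∈ F)
    {t : ParseTree T g.NT} (ht : IsValid g t) : ∀ B ∈ t.nonterminals, B ∈ F := by
  induction ht with
  | leaf => simp [nonterminals]
  | @node r c hr _ _ ih =>
    simp only [nonterminals, mem_cons, mem_flatMap]
    rintro B (rfl | ⟨s, hs, hB⟩)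
    exacts [hF r hr, ih s hs B hB]

theorem IsValid.length_yield_le {r : ContextFreeRule T g.NT} {c : List (ParseTree T g.NT)}
    (h : IsValid g (.node r c)) {K M : ℕ} (hK : ∀ r ∈ g.rules, r.output.length ≤ K)
    (hM : ∀ s ∈ c, s.yield.length ≤ M) : (ParseTree.node r c).yield.length ≤ K * M := by
  rcases h with _ | ⟨hr, hc, -⟩
  have hlen : c.length ≤ K := by simpa [← hc] using hK r hr
  calc (ParseTree.node r c).yield.length = (c.map fun s => s.yield.length).sum := by
        simp [length_flatMap]
    _ ≤ c.length * M := by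
        simpa using sum_le_card_nsmul (c.map fun s => s.yield.length) M (by simpa using hM)
    _ ≤ K * M := Nat.mul_le_mul_right M hlen

theorem IsValid.exists_pumps_of_mem_nonterminals {r : ContextFreeRule T g.NT}
    {c : List (ParseTree T g.NT)} (ht : IsValid g (.node r c)) (hmin : IsMinimal g (.node r c))
    (hrep : r.input ∈ c.flatMap nonterminals) : ∃ u v x y z, Pumps g (.node r c) u v x y z := by
  obtain ⟨s', hs', hA⟩ := mem_flatMap.mp hrep
  have hsize' := size_lt_of_mem (r := r) hs'
  obtain ⟨c₁, c₂, rfl⟩ := append_of_mem hs'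
  have hs'valid : IsValid g s' := by rcases ht with _ | ⟨-, -, hc⟩; exact hc s' hs'
  obtain ⟨s, v, y, hs, hsroot, hsize, hyield, hder⟩ := hs'valid.exists_subtree hA
  have hloop := ht.derives_of_child hder
  refine ⟨[], c₁.flatMap yield ++ v, s.yield, y ++ c₂.flatMap yield, [], by simp [hyield],
    fun hvy => ?_, fun i => ?_⟩
  -- otherwise `s` would have the root and the yield of the whole tree, with fewer nodes
  · simp only [append_eq_nil_iff] at hvy
    obtain ⟨⟨h₁, rfl⟩, rfl, h₂⟩ := hvy
    have := hmin s hs (by simp [hsroot]) (by simp [hyield, h₁, h₂])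
    omega
  · simpa [pump] using Derives.pump (v := (c₁.flatMap yield ++ v).map .terminal)
      (y := (y ++ c₂.flatMap yield).map .terminal) (by simpa using hloop)
      (hsroot ▸ hs.derives) i

theorem IsValid.length_yield_le_or_pumps [DecidableEq g.NT] {K : ℕ} (hK0 : 0 < K)
    (hK : ∀ r ∈ g.rules, r.output.length ≤ K) {t : ParseTree T g.NT} (ht : IsValid g t)
    (hmin : IsMinimal g t) {F : Finset g.NT} (hF : ∀ B ∈ t.nonterminals, B ∈ F) :
    t.yield.length ≤ K ^ F.card ∨ ∃ u v x y z, Pumps g t u v x y z := by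
  induction ht generalizing F with
  | leaf a => exact .inl (by simpa using Nat.one_le_pow _ _ hK0)
  | @node r c hr hc hc' ih =>
    have ht := IsValid.node hr hc hc'
    by_cases hrep : r.input ∈ c.flatMap nonterminals
    · exact .inr (ht.exists_pumps_of_mem_nonterminals hmin hrep)
    simp only [nonterminals, mem_cons, mem_flatMap] at hF hrep
    have hF' : ∀ s ∈ c, ∀ B ∈ s.nonterminals, B ∈ F.erase r.input := fun s hs B hB =>
      Finset.mem_erase.mpr
        ⟨by rintro rfl; exact hrep ⟨s, hs, hB⟩, hF B (.inr ⟨s, hs, hB⟩)⟩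
    by_cases hshort : ∀ s ∈ c, s.yield.length ≤ K ^ (F.erase r.input).card
    · left
      calc _ ≤ K * K ^ (F.erase r.input).card := ht.length_yield_le hK hshort
        _ = K ^ F.card := by rw [← pow_succ', Finset.card_erase_add_one (hF _ (.inl rfl))]
    · right
      push Not at hshort
      obtain ⟨s, hs, hlong⟩ := hshort
      obtain ⟨c₁, c₂, rfl⟩ := append_of_mem hs
      obtain hle | ⟨u, v, x, y, z, hp⟩ := ih s hs (hmin.of_child ht) (hF' s hs)
      · omega
      · exact ⟨_, v, x, y, _, hp.of_child ht⟩

theorem IsValid.exists_pumps [DecidableEq g.NT] {K : ℕ} (hK0 : 0 < K)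
    (hK : ∀ r ∈ g.rules, r.output.length ≤ K) {F : Finset g.NT}
    (hF : ∀ r ∈ g.rules, r.input ∈ F) {t : ParseTree T g.NT} (ht : IsValid g t)
    (hmin : IsMinimal g t) (hlong : K ^ F.card < t.yield.length) :
    ∃ u v x y z, Pumps g t u v x y z ∧ (v ++ x ++ y).length ≤ K ^ (F.card + 1) := by
  induction ht with
  | leaf a => exact absurd hlong (by simpa using Nat.one_le_pow F.card K hK0 |>.not_gt)
  | @node r c hr hc hc' ih =>
    have ht := IsValid.node hr hc hc'
    by_cases hshort : ∀ s ∈ c, s.yield.length ≤ K ^ F.card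
    · obtain hle | ⟨u, v, x, y, z, hp⟩ :=
        ht.length_yield_le_or_pumps hK0 hK hmin (ht.mem_of_mem_nonterminals hF)
      · omega
      · refine ⟨u, v, x, y, z, hp, ?_⟩
        have hsplit := congrArg length hp.1
        have hbound := ht.length_yield_le hK hshort
        simp only [length_append] at hsplit ⊢
        rw [pow_succ']
        omega
    · push Not at hshort
      obtain ⟨s, hs, hlong'⟩ := hshort
      obtain ⟨c₁, c₂, rfl⟩ := append_of_mem hs
      obtain ⟨u, v, x, y, z, hp, hlen⟩ := ih s hs (hmin.of_child ht) hlong'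
      exact ⟨_, v, x, y, _, hp.of_child ht, hlen⟩

end ParseTree

end ContextFreeGrammar

open ContextFreeGrammar ParseTree in
theorem Language.IsContextFree.exists_pumping {T : Type*} {L : Language T}
    (hL : L.IsContextFree) :
    ∃ p, ∀ w ∈ L, p < w.length → ∃ u v x y z,
      w = u ++ v ++ x ++ y ++ z ∧ v ++ y ≠ [] ∧ (v ++ x ++ y).length ≤ p ∧
        ∀ i, pump u v x y z i ∈ L := by
  classical
  obtain ⟨g, rfl⟩ := hL
  set K := max 1 (g.rules.sup fun r => r.output.length)
  set F := g.rules.image ContextFreeRule.input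
  have hK0 : 0 < K := lt_max_of_lt_left one_pos
  have hK : ∀ r ∈ g.rules, r.output.length ≤ K := fun r hr =>
    (Finset.le_sup (f := fun r => r.output.length) hr).trans (le_max_right _ _)
  have hF : ∀ r ∈ g.rules, r.input ∈ F := fun r hr => Finset.mem_image_of_mem _ hr
  refine ⟨K ^ (F.card + 1), fun w hw hlong => ?_⟩
  obtain ⟨t₀, ht₀, hroot₀, rfl⟩ := exists_isValid_of_mem_language hw
  obtain ⟨t, ht, hroot, hyield, hmin⟩ := ht₀.exists_isMinimal
  have hlong' : K ^ F.card < t.yield.length :=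
    hyield ▸ (Nat.pow_le_pow_right hK0 (Nat.le_succ _)).trans_lt hlong
  obtain ⟨u, v, x, y, z, ⟨hw, hvy, hder⟩, hlen⟩ := ht.exists_pumps hK0 hK hF hmin hlong'
  refine ⟨u, v, x, y, z, hyield ▸ hw, hvy, hlen, fun i => ?_⟩
  simpa [hroot, hroot₀] using hder i

def abcPow (p : ℕ) : List (Fin 3) := replicate p 0 ++ replicate p 1 ++ replicate p 2

theorem abcPow_mem_krewerasLanguage (p : ℕ) : abcPow p ∈ krewerasLanguage := by
  refine ⟨by simp [abcPow, count_replicate], by simp [abcPow, count_replicate], fun u hu => ?_⟩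
  rw [prefix_iff_eq_take.mp hu]
  simp [abcPow, take_append, take_replicate, count_replicate]
  omega

theorem getElem_abcPow {p i : ℕ} (hi : i < (abcPow p).length) :
    (abcPow p)[i] = if i < p then 0 else if i < 2 * p then 1 else 2 := by
  simp only [abcPow, getElem_append, getElem_replicate, length_append, length_replicate]
  split_ifs <;> first | rfl | omega

theorem length_lt_of_infix_abcPow {p : ℕ} {m : List (Fin 3)} (hm : m <:+: abcPow p)
    (h₀ : 0 ∈ m) (h₂ : 2 ∈ m) : p < m.length := by
  obtain ⟨k, -, hget⟩ := infix_iff_getElem?.mp hm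
  obtain ⟨j₀, hj₀, hm₀⟩ := getElem_of_mem h₀
  obtain ⟨j₂, hj₂, hm₂⟩ := getElem_of_mem h₂
  obtain ⟨_, hw₀⟩ := List.getElem?_eq_some_iff.mp (hget j₀ hj₀)
  obtain ⟨_, hw₂⟩ := List.getElem?_eq_some_iff.mp (hget j₂ hj₂)
  rw [getElem_abcPow, hm₀] at hw₀
  rw [getElem_abcPow, hm₂] at hw₂
  split_ifs at hw₀ hw₂ <;> omega

theorem count_zero_add_count_one_add_count_two (l : List (Fin 3)) :
    l.count 0 + l.count 1 + l.count 2 = l.length := by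
  induction l with
  | nil => rfl
  | cons a l ih => fin_cases a <;> simp <;> omega

theorem length_eq_three_mul_count {w : List (Fin 3)} (hw : w ∈ krewerasLanguage) (a : Fin 3) :
    w.length = 3 * w.count a := by
  obtain ⟨h₁, h₂, -⟩ := hw
  have := count_zero_add_count_one_add_count_two w
  fin_cases a <;> simp <;> omega

theorem krewerasLanguage_not_contextFree : ¬ krewerasLanguage.IsContextFree := by
  intro hcf
  obtain ⟨p, hp⟩ := hcf.exists_pumping
  have hw := abcPow_mem_krewerasLanguage (p + 1)
  obtain ⟨u, v, x, y, z, hsplit, hvy, hlen, hpump⟩ := hp _ hw (by simp [abcPow]; omega)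
  have hw' : u ++ x ++ z ∈ krewerasLanguage := by simpa [pump] using hpump 0
  -- both words are balanced, hence so is the nonempty `v y`
  have hmem (a : Fin 3) : a ∈ v ++ x ++ y := by
    have h₁ := length_eq_three_mul_count (hsplit ▸ hw) a
    have h₂ := length_eq_three_mul_count hw' a
    have h₃ := length_pos_iff.mpr hvy
    simp only [length_append, count_append] at h₁ h₂ h₃
    rw [← count_pos_iff, count_append, count_append]
    omega
  have := length_lt_of_infix_abcPow (p := p + 1) ⟨u, z, by simp [hsplit]⟩ (hmem 0) (hmem 2)
  omega
end

section
/- If F(u,v;t) is a Laurent series in t whose coefficients are symmetric polynomials in u and v, and Y₀, Y₁ satisfy Y₀+Y₁ = x̄/t − x̄² and Y₀Y₁ = x̄ (with x̄ = 1/x), then F(Y₀,Y₁;t), when defined, is a Laurent series in t with coefficients that are polynomials in x̄, and its constant term with respect to x̄ equals F(0,0;t). -/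
/-!
By the fundamental theorem of symmetric polynomials, `F(u,v) = P(u+v, uv)` for a polynomial `P`
with Laurent-series coefficients. Hence `F(Y₀,Y₁) = P(x̄/t − x̄², x̄)`, which is the image of a
Laurent series `G` in `t` over `ℚ[x̄]`. Both arguments of `P` have all their `t`-coefficients
divisible by `x̄`, so setting `x̄ = 0` in `G` kills them and leaves `P(0,0) = F(0,0)`.
-/

open HahnSeries MvPolynomial

namespace HahnSeries

variable {Γ R S T : Type*} [AddCommMonoid Γ] [PartialOrder Γ] [IsOrderedCancelAddMonoid Γ]
  [Semiring R] [Semiring S] [Semiring T]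

noncomputable def mapRingHom (f : R →+* S) : HahnSeries Γ R →+* HahnSeries Γ S where
  toFun x := x.map f
  map_one' := HahnSeries.map_one f.toMonoidWithZeroHom
  map_mul' _ _ := HahnSeries.map_mul f.toNonUnitalRingHom
  map_zero' := HahnSeries.map_zero f.toZeroHom
  map_add' _ _ := HahnSeries.map_add f.toAddMonoidHom

@[simp]
theorem coeff_mapRingHom (f : R →+* S) (x : HahnSeries Γ R) (g : Γ) :
    (mapRingHom f x).coeff g = f (x.coeff g) := rfl

@[simp]
theorem mapRingHom_single (f : R →+* S) (g : Γ) (r : R) :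
    mapRingHom f (single g r) = single g (f r) :=
  HahnSeries.map_single f.toZeroHom

theorem mapRingHom_comp (g : S →+* T) (f : R →+* S) :
    (mapRingHom g).comp (mapRingHom f) = (mapRingHom (g.comp f) : HahnSeries Γ R →+* _) :=
  RingHom.ext fun _ => HahnSeries.ext rfl

end HahnSeries

namespace MvPolynomial

theorem isSymmetric_of_rename_swap {R : Type*} [CommSemiring R] {F : MvPolynomial (Fin 2) R}
    (hF : rename (Equiv.swap 0 1) F = F) : F.IsSymmetric := by
  intro e
  obtain rfl | rfl : e = 1 ∨ e = Equiv.swap 0 1 := by revert e; decide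
  · exact rename_id_apply F
  · exact hF

theorem exists_bind₁_eq_of_rename_swap {R : Type*} [CommRing R] {F : MvPolynomial (Fin 2) R}
    (hF : rename (Equiv.swap 0 1) F = F) :
    ∃ P : MvPolynomial (Fin 2) R, bind₁ ![X 0 + X 1, X 0 * X 1] P = F := by
  obtain ⟨P, hP⟩ := (esymmAlgHom_fin_bijective R 2).2 ⟨F, isSymmetric_of_rename_swap hF⟩
  refine ⟨P, Eq.trans ?_ (congrArg Subtype.val hP)⟩
  rw [esymmAlgHom_apply, aeval_eq_bind₁]
  congr 1
  ext i : 1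
  fin_cases i
  · simp [esymm_one, Fin.sum_univ_two]
  · simp [esymm, show (Finset.univ : Finset (Fin 2)).powersetCard 2 = {Finset.univ} from rfl]

theorem eval₂_bind₁_add_mul {R S : Type*} [CommSemiring R] [CommSemiring S] (f : R →+* S)
    (y : Fin 2 → S) (P : MvPolynomial (Fin 2) R) :
    eval₂ f y (bind₁ (![X 0 + X 1, X 0 * X 1] : Fin 2 → MvPolynomial (Fin 2) R) P) =
      eval₂ f ![y 0 + y 1, y 0 * y 1] P := by
  rw [← coe_eval₂Hom, eval₂Hom_bind₁, coe_eval₂Hom]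
  congr 1
  ext i : 1
  fin_cases i <;> simp

theorem eval_zero_bind₁_add_mul {R : Type*} [CommSemiring R] (P : MvPolynomial (Fin 2) R) :
    eval 0 (bind₁ (![X 0 + X 1, X 0 * X 1] : Fin 2 → MvPolynomial (Fin 2) R) P) = eval 0 P := by
  rw [MvPolynomial.eval, coe_eval₂Hom, eval₂_bind₁_add_mul]
  congr 1
  ext i : 1
  fin_cases i <;> simp

end MvPolynomial

/-- Here `x̄` is `Polynomial.X` and `t` the Laurent variable; `ψ` and `φ` embed the Laurent series
rings over `ℚ[x̄]` and `ℚ` into the ring `B` where `Y₀, Y₁` live. -/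
theorem symmetric_kernel_lemma
    (B : Type*) [CommRing B]
    (φ : LaurentSeries ℚ →+* B)
    (ψ : LaurentSeries (Polynomial ℚ) →+* B)
    (hcompat : ∀ a : LaurentSeries ℚ, ψ (a.map (Polynomial.C : ℚ →+* Polynomial ℚ)) = φ a)
    (Y₀ Y₁ : B)
    (hsum : Y₀ + Y₁ = ψ (HahnSeries.single (-1 : ℤ) Polynomial.X
      - HahnSeries.single (0 : ℤ) (Polynomial.X ^ 2)))
    (hprod : Y₀ * Y₁ = ψ (HahnSeries.single (0 : ℤ) Polynomial.X))
    (F : MvPolynomial (Fin 2) (LaurentSeries ℚ))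
    (hsym : MvPolynomial.rename (Equiv.swap (0 : Fin 2) 1) F = F) :
    ∃ G : LaurentSeries (Polynomial ℚ),
      MvPolynomial.eval₂ φ ![Y₀, Y₁] F = ψ G ∧
      ∀ n : ℤ, (G.coeff n).coeff 0 = (MvPolynomial.eval (0 : Fin 2 → LaurentSeries ℚ) F).coeff n := by
  obtain ⟨P, rfl⟩ := exists_bind₁_eq_of_rename_swap hsym
  set θ : LaurentSeries ℚ →+* LaurentSeries (Polynomial ℚ) := mapRingHom Polynomial.C
  set G := eval₂ θ ![single (-1) Polynomial.X - single 0 (Polynomial.X ^ 2), single 0 Polynomial.X] P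
  refine ⟨G, ?_, fun n => ?_⟩
  · have hψθ : ψ.comp θ = φ := RingHom.ext hcompat
    rw [eval₂_comp_left, hψθ, eval₂_bind₁_add_mul]
    congr 1
    ext i : 1
    fin_cases i <;> simp [hsum, hprod]
  · have hG : mapRingHom (Polynomial.evalRingHom 0) G = eval 0 P := by
      rw [eval₂_comp_left, mapRingHom_comp, MvPolynomial.eval, coe_eval₂Hom]
      congr 1
      · ext a m; simp
      · ext i : 1; fin_cases i <;> simp
    rw [eval_zero_bind₁_add_mul, ← hG, coeff_mapRingHom, Polynomial.coe_evalRingHom,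
      Polynomial.coeff_zero_eq_eval_zero]
end

section
/- Let 0 < p, q, r with p+q+r = 1 and r < min(p,q), and let w be the smallest positive root of w = 2 + pqr·w³. Then 1/max(p,q) ≤ w ≤ 1/√(pq) ≤ 1/min(p,q) < 1/r, with the first three inequalities being equalities if and only if p = q. -/
/-!
Write `f(t) = 2 + c t³ - t` with `c = pqr`, and `M = max p q`, `m = min p q`, so that
`c = M m r` and `M + m + r = 1`. Clearing denominators, `M³ f(1/M) = M (M - m) (M - r) ≥ 0`
and `s³ f(1/s) = s² (2s - M - m) ≤ 0` for `s = √(pq)`, both vanishing exactly when `M = m`.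
The intermediate value theorem gives a root in `[0, 1/s]`, whence `w ≤ 1/s`. Since `3 c / M² < 1`,
`t ↦ t - c t³` is strictly increasing on `[0, 1/M]`, so `f` has no root in `[0, 1/M)` and
`1/M ≤ w`. When `M = m` the chain `1/M ≤ w ≤ 1/s ≤ 1/m` collapses.
-/

lemma sub_mul_pow_three_lt {c s t : ℝ} (hc : 0 ≤ c) (ht : 0 ≤ t) (hts : t < s)
    (hs : 3 * c * s ^ 2 < 1) : t - c * t ^ 3 < s - c * s ^ 3 := by
  have hlt : c * (s ^ 2 + s * t + t ^ 2) < 1 := by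
    nlinarith [mul_le_mul_of_nonneg_left (show s ^ 2 + s * t + t ^ 2 ≤ 3 * s ^ 2 by nlinarith) hc]
  have hfactor : s - c * s ^ 3 - (t - c * t ^ 3) = (s - t) * (1 - c * (s ^ 2 + s * t + t ^ 2)) := by
    ring
  nlinarith [mul_pos (sub_pos.mpr hts) (sub_pos.mpr hlt)]

lemma exists_pos_root_le {c x : ℝ} (hc : 0 ≤ c) (hx : 0 ≤ x) (hfx : 2 + c * x ^ 3 ≤ x) :
    ∃ t, 0 < t ∧ t ≤ x ∧ t = 2 + c * t ^ 3 := by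
  have hcont : ContinuousOn (fun t : ℝ => 2 + c * t ^ 3 - t) (Set.Icc 0 x) := by fun_prop
  have hzero : (0 : ℝ) ∈ Set.Icc (2 + c * x ^ 3 - x) (2 + c * 0 ^ 3 - 0) :=
    ⟨by linarith, by norm_num⟩
  obtain ⟨t, ⟨ht0, htx⟩, hroot⟩ := intermediate_value_Icc' hx hcont hzero
  replace hroot : t = 2 + c * t ^ 3 := by linarith [show 2 + c * t ^ 3 - t = 0 from hroot]
  exact ⟨t, by nlinarith [mul_nonneg hc (pow_nonneg ht0 3)], htx, hroot⟩

section MaxMin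

variable {M m r w : ℝ}

lemma pow_three_mul_cubic_one_div_max (hM : M ≠ 0) (hsum : M + m + r = 1) :
    M ^ 3 * (2 + M * m * r * (1 / M) ^ 3 - 1 / M) = M * (M - m) * (M - r) := by
  field_simp
  linear_combination M * hsum

lemma pow_three_mul_cubic_one_div_sqrt {s : ℝ} (hs : s ≠ 0) (hs2 : s ^ 2 = M * m)
    (hsum : M + m + r = 1) :
    s ^ 3 * (2 + M * m * r * (1 / s) ^ 3 - 1 / s) = s ^ 2 * (2 * s - (M + m)) := by
  field_simp
  linear_combination (-r) * hs2 + s ^ 2 * hsum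

lemma one_div_le_of_root (hr : 0 < r) (hrm : r < m) (hmM : m ≤ M) (hsum : M + m + r = 1)
    (hw : w = 2 + M * m * r * w ^ 3) (hw0 : 0 ≤ w) : 1 / M ≤ w := by
  have hm : 0 < m := hr.trans hrm
  have hM : 0 < M := hm.trans_le hmM
  by_contra! hwM
  have hmono : 3 * (M * m * r) * (1 / M) ^ 2 < 1 := by
    rw [show 3 * (M * m * r) * (1 / M) ^ 2 = 3 * r * (m / M) by field_simp]
    nlinarith [div_le_one_of_le₀ hmM hM.le, div_pos hm hM]
  have hlt := sub_mul_pow_three_lt (by positivity) hw0 hwM hmono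
  have hdefect := pow_three_mul_cubic_one_div_max hM.ne' hsum
  nlinarith [mul_nonneg (mul_nonneg hM.le (sub_nonneg.mpr hmM)) (sub_nonneg.mpr (hrm.le.trans hmM)),
    pow_pos hM 3]

lemma eq_of_one_div_max_root (hrm : r < m) (hmM : m ≤ M) (hsum : M + m + r = 1)
    (hroot : 1 / M = 2 + M * m * r * (1 / M) ^ 3) : m = M := by
  have hM : 0 < M := by linarith
  have hdefect := pow_three_mul_cubic_one_div_max hM.ne' hsum
  rw [← hroot, sub_self, mul_zero] at hdefect
  by_contra hne
  have hlt : m < M := lt_of_le_of_ne hmM hne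
  linarith [mul_pos (mul_pos hM (sub_pos.mpr hlt)) (sub_pos.mpr (hrm.trans hlt))]

lemma root_le_one_div_sqrt (hr : 0 < r) (hm : 0 < m) (hmM : m ≤ M) (hsum : M + m + r = 1)
    (hwmin : ∀ w', 0 < w' → w' = 2 + M * m * r * w' ^ 3 → w ≤ w') :
    w ≤ 1 / Real.sqrt (M * m) := by
  have hM : 0 < M := hm.trans_le hmM
  set s := Real.sqrt (M * m)
  have hs : 0 < s := Real.sqrt_pos.mpr (by positivity)
  have hs2 : s ^ 2 = M * m := Real.sq_sqrt (by positivity)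
  have hamgm : 2 * s ≤ M + m := by nlinarith [sq_nonneg (M - m)]
  have hdefect := pow_three_mul_cubic_one_div_sqrt hs.ne' hs2 hsum
  obtain ⟨t, ht0, hts, hroot⟩ := exists_pos_root_le (c := M * m * r) (x := 1 / s) (by positivity)
    (by positivity) (by nlinarith [pow_pos hs 3, pow_pos hs 2])
  exact (hwmin t ht0 hroot).trans hts

lemma eq_of_one_div_sqrt_root (hm : 0 < m) (hmM : m ≤ M) (hsum : M + m + r = 1)
    (hroot : 1 / Real.sqrt (M * m) = 2 + M * m * r * (1 / Real.sqrt (M * m)) ^ 3) : m = M := by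
  have hM : 0 < M := hm.trans_le hmM
  set s := Real.sqrt (M * m)
  have hs : 0 < s := Real.sqrt_pos.mpr (by positivity)
  have hs2 : s ^ 2 = M * m := Real.sq_sqrt (by positivity)
  have hdefect := pow_three_mul_cubic_one_div_sqrt hs.ne' hs2 hsum
  rw [← hroot, sub_self, mul_zero] at hdefect
  have hamgm : 2 * s = M + m := by nlinarith [pow_pos hs 2]
  nlinarith [sq_nonneg (M - m)]

end MaxMin

theorem w_bounds_general (p q r w : ℝ) (hr : 0 < r)
    (hsum : p + q + r = 1) (hmin : r < min p q)
    (hw : w = 2 + p * q * r * w ^ 3) (hwpos : 0 < w)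
    (hwmin : ∀ w', 0 < w' → w' = 2 + p * q * r * w' ^ 3 → w ≤ w') :
    (1 / max p q ≤ w ∧ w ≤ 1 / Real.sqrt (p * q) ∧
      1 / Real.sqrt (p * q) ≤ 1 / min p q ∧ 1 / min p q < 1 / r) ∧
    (1 / max p q = w ↔ p = q) ∧ (w = 1 / Real.sqrt (p * q) ↔ p = q) ∧
    (1 / Real.sqrt (p * q) = 1 / min p q ↔ p = q) := by
  have hpq_iff : p = q ↔ min p q = max p q := by
    refine ⟨fun h => by simp [h], fun h => ?_⟩
    exact le_antisymm ((le_max_left p q).trans (h ▸ min_le_right p q))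
      ((le_max_right p q).trans (h ▸ min_le_left p q))
  have hsum' : max p q + min p q + r = 1 := by rw [max_add_min]; exact hsum
  have hmM : min p q ≤ max p q := min_le_max
  rw [← max_mul_min p q] at hw hwmin ⊢
  generalize max p q = M at *
  generalize min p q = m at *
  have hm : 0 < m := hr.trans hmin
  have hlow : 1 / M ≤ w := one_div_le_of_root hr hmin hmM hsum' hw hwpos.le
  have hup : w ≤ 1 / Real.sqrt (M * m) := root_le_one_div_sqrt hr hm hmM hsum' hwmin
  have hsqrt : 1 / Real.sqrt (M * m) ≤ 1 / m := one_div_le_one_div_of_le hm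
    (Real.le_sqrt_of_sq_le (by nlinarith))
  have hsqueeze : m = M → 1 / M = w ∧ w = 1 / Real.sqrt (M * m) ∧ 1 / Real.sqrt (M * m) = 1 / m :=
    fun h => by
      subst h
      exact ⟨by linarith, by linarith, by linarith⟩
  refine ⟨⟨hlow, hup, hsqrt, one_div_lt_one_div_of_lt hr hmin⟩, ?_, ?_, ?_⟩ <;> rw [hpq_iff]
  · exact ⟨fun h => eq_of_one_div_max_root hmin hmM hsum' (h ▸ hw), fun h => (hsqueeze h).1⟩
  · exact ⟨fun h => eq_of_one_div_sqrt_root hm hmM hsum' (h ▸ hw), fun h => (hsqueeze h).2.1⟩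
  · refine ⟨fun h => ?_, fun h => (hsqueeze h).2.2⟩
    have hsm : Real.sqrt (M * m) = m := by simpa using h
    nlinarith [Real.sq_sqrt (show 0 ≤ M * m by nlinarith)]

/-- Bounds on the smallest positive root `w` of `w = 2 + pqr·w³`:
`1/max(p,q) ≤ w ≤ 1/√(pq) ≤ 1/min(p,q) < 1/r`, with the first three inequalities
being equalities iff `p = q`. -/
theorem w_bounds (p q r w : ℝ) (hp : 0 < p) (hq : 0 < q) (hr : 0 < r)
    (hsum : p + q + r = 1) (hmin : r < min p q)
    (hw : w = 2 + p * q * r * w ^ 3) (hwpos : 0 < w)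
    (hwmin : ∀ w', 0 < w' → w' = 2 + p * q * r * w' ^ 3 → w ≤ w') :
    (1 / max p q ≤ w ∧ w ≤ 1 / Real.sqrt (p * q) ∧
      1 / Real.sqrt (p * q) ≤ 1 / min p q ∧ 1 / min p q < 1 / r) ∧
    (1 / max p q = w ↔ p = q) ∧ (w = 1 / Real.sqrt (p * q) ↔ p = q) ∧
    (1 / Real.sqrt (p * q) = 1 / min p q ↔ p = q) :=
  w_bounds_general p q r w hr hsum hmin hw hwpos hwmin
end

section
/- Let 0 < p, q, r with p+q+r=1 and let w satisfy w = 2 + pqr·w³ with w the smallest positive root. Then (pw−1)²(1−qrw²) = (qw−1)²(1−prw²) = (rw−1)²(1−pqw²). -/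
/-- If `w = 2 + pqr·w³` with `p+q+r = 1`, then
`(pw−1)²(1−qrw²) = (qw−1)²(1−prw²) = (rw−1)²(1−pqw²)`. -/
theorem w_symmetric_identities (p q r w : ℝ) (hp : 0 < p) (hq : 0 < q) (hr : 0 < r)
    (hsum : p + q + r = 1) (hw : w = 2 + p * q * r * w ^ 3) :
    (p * w - 1) ^ 2 * (1 - q * r * w ^ 2) = (q * w - 1) ^ 2 * (1 - p * r * w ^ 2) ∧
    (q * w - 1) ^ 2 * (1 - p * r * w ^ 2) = (r * w - 1) ^ 2 * (1 - p * q * w ^ 2) := by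
  constructor
  · linear_combination (p - q) * w * hw + (p - q) * w ^ 2 * hsum
  · linear_combination (q - r) * w * hw + (q - r) * w ^ 2 * hsum
end

section
/- Let 0 < p, q, r with p+q+r=1 and r < min(p,q), and let Δ(x) = (1 − 1/x)² − 4pqr·x. Then Δ has three real roots x₀ < x₁ < x₂ (as roots of the cubic x·Δ(x) up to sign), satisfying 0 < x₀ < 1 < x₁ < 1/max(p,q) ≤ 1/min(p,q) < 1/r ≤ x₂. -/
/-- The discriminant `Δ(x) = (1−1/x)² − 4pqr·x` (equivalently, the cubic
`(x−1)² − 4pqr·x³`) has three real roots `x₀ < x₁ < x₂` satisfying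
`0 < x₀ < 1 < x₁ < 1/max(p,q) ≤ 1/min(p,q) < 1/r ≤ x₂`. -/
theorem discriminant_roots (p q r : ℝ) (hp : 0 < p) (hq : 0 < q) (hr : 0 < r)
    (hsum : p + q + r = 1) (hmin : r < min p q) :
    ∃ x₀ x₁ x₂ : ℝ,
      ((x₀ - 1) ^ 2 - 4 * p * q * r * x₀ ^ 3 = 0) ∧
      ((x₁ - 1) ^ 2 - 4 * p * q * r * x₁ ^ 3 = 0) ∧
      ((x₂ - 1) ^ 2 - 4 * p * q * r * x₂ ^ 3 = 0) ∧
      (∀ x : ℝ, (x - 1) ^ 2 - 4 * p * q * r * x ^ 3 = 0 → x = x₀ ∨ x = x₁ ∨ x = x₂) ∧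
      0 < x₀ ∧ x₀ < 1 ∧ 1 < x₁ ∧ x₁ < 1 / max p q ∧
      1 / max p q ≤ 1 / min p q ∧ 1 / min p q < 1 / r ∧ 1 / r ≤ x₂ := by
  set c := 4 * p * q * r with hc
  have hc0 : 0 < c := by positivity
  set M := max p q with hMdef
  set m := min p q with hmdef
  have hM : 0 < M := lt_max_of_lt_left hp
  have hm : 0 < m := lt_min hp hq
  have hmM : m ≤ M := min_le_max
  have hMm1 : M + m = p + q := max_add_min p q
  have hMm2 : M * m = p * q := max_mul_min p q
  have hrm : r < m := hmin
  have hM1 : M < 1 := max_lt (by linarith) (by linarith)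
  have hr1 : r < 1 := by linarith
  set f : ℝ → ℝ := fun x => (x - 1) ^ 2 - c * x ^ 3 with hfdef
  have hf : Continuous f := by fun_prop
  have hf0 : f 0 = 1 := by simp [hfdef]
  have hf1 : f 1 = -c := by simp [hfdef]
  have hfM : 0 < f (1 / M) := by
    have h1 : f (1 / M) = (M * (1 - M) ^ 2 - c) / M ^ 3 := by
      simp only [hfdef]; field_simp
    rw [h1]
    apply div_pos _ (by positivity)
    have h2 : M * (1 - M) ^ 2 - c = M * (m - r) ^ 2 := by
      have h1m : 1 - M = m + r := by linarith
      rw [h1m, hc]; nlinarith [hMm2]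
    rw [h2]
    exact mul_pos hM (pow_pos (by linarith) 2)
  have hfr : 0 ≤ f (1 / r) := by
    have h1 : f (1 / r) = (r * (1 - r) ^ 2 - c) / r ^ 3 := by
      simp only [hfdef]; field_simp
    rw [h1]
    apply div_nonneg _ (by positivity)
    have h2 : r * (1 - r) ^ 2 - c = r * (p - q) ^ 2 := by
      have : 1 - r = p + q := by linarith
      rw [this, hc]; ring
    rw [h2]; positivity
  set T : ℝ := max (1 / r) (1 / c) + 1 with hTdef
  have hTr : 1 / r ≤ T := by
    have := le_max_left (1 / r) (1 / c); linarith
  have hT1 : 1 < T := lt_of_lt_of_le (one_lt_one_div hr hr1) hTr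
  have hT0 : 0 < T := by linarith
  have hcT : 1 < c * T := by
    have h1 : 1 / c < T := by
      have := le_max_right (1 / r) (1 / c); linarith
    calc 1 = c * (1 / c) := by field_simp
    _ < c * T := by exact mul_lt_mul_of_pos_left h1 hc0
  have hfT : f T < 0 := by
    simp only [hfdef]
    nlinarith [mul_pos (sub_pos.mpr hcT) (pow_pos hT0 2)]
  -- root x₀ ∈ (0,1)
  obtain ⟨x₀, hx₀mem, hx₀⟩ : ∃ x ∈ Set.Icc (0:ℝ) 1, f x = 0 := by
    have := intermediate_value_Icc' (by norm_num : (0:ℝ) ≤ 1) hf.continuousOn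
      (by rw [hf0, hf1]; constructor <;> linarith : (0:ℝ) ∈ Set.Icc (f 1) (f 0))
    obtain ⟨x, hx1, hx2⟩ := this; exact ⟨x, hx1, hx2⟩
  have h1M : (1:ℝ) < 1 / M := one_lt_one_div hM hM1
  obtain ⟨x₁, hx₁mem, hx₁⟩ : ∃ x ∈ Set.Icc (1:ℝ) (1 / M), f x = 0 := by
    have := intermediate_value_Icc (le_of_lt h1M) hf.continuousOn
      (by rw [hf1]; constructor <;> linarith : (0:ℝ) ∈ Set.Icc (f 1) (f (1 / M)))
    obtain ⟨x, hx1, hx2⟩ := this; exact ⟨x, hx1, hx2⟩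
  obtain ⟨x₂, hx₂mem, hx₂⟩ : ∃ x ∈ Set.Icc (1 / r) T, f x = 0 := by
    have := intermediate_value_Icc' hTr hf.continuousOn
      (by constructor <;> linarith : (0:ℝ) ∈ Set.Icc (f T) (f (1 / r)))
    obtain ⟨x, hx1, hx2⟩ := this; exact ⟨x, hx1, hx2⟩
  -- strict bounds
  have hx₀0 : 0 < x₀ := by
    rcases lt_or_eq_of_le hx₀mem.1 with h | h
    · exact h
    · exfalso; rw [← h] at hx₀; rw [hf0] at hx₀; norm_num at hx₀
  have hx₀1 : x₀ < 1 := by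
    rcases lt_or_eq_of_le hx₀mem.2 with h | h
    · exact h
    · exfalso; rw [h, hf1] at hx₀; linarith
  have hx₁1 : 1 < x₁ := by
    rcases lt_or_eq_of_le hx₁mem.1 with h | h
    · exact h
    · exfalso; rw [← h, hf1] at hx₁; linarith
  have hx₁M : x₁ < 1 / M := by
    rcases lt_or_eq_of_le hx₁mem.2 with h | h
    · exact h
    · exfalso; rw [h] at hx₁; linarith
  have hMminv : 1 / M ≤ 1 / m := one_div_le_one_div_of_le hm hmM
  have hmrinv : 1 / m < 1 / r := one_div_lt_one_div_of_lt hr hrm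
  have hx₂r : 1 / r ≤ x₂ := hx₂mem.1
  -- distinctness chain
  have hd01 : x₀ < x₁ := by linarith
  have hd12 : x₁ < x₂ := by linarith
  refine ⟨x₀, x₁, x₂, hx₀, hx₁, hx₂, ?_, hx₀0, hx₀1, hx₁1, hx₁M, hMminv, hmrinv, hx₂r⟩
  intro x hx
  by_contra h
  push_neg at h
  obtain ⟨hne0, hne1, hne2⟩ := h
  set P : Polynomial ℝ := (Polynomial.X - 1) ^ 2 - Polynomial.C c * Polynomial.X ^ 3 with hP
  have hPdeg : P.natDegree = 3 := by
    rw [hP]; compute_degree!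
    exact hc0.ne'
  have hPne : P ≠ 0 := fun hz => by simp [hz] at hPdeg
  have hroot : ∀ y : ℝ, f y = 0 → y ∈ P.roots := by
    intro y hy
    rw [Polynomial.mem_roots hPne]
    simpa [hP, Polynomial.IsRoot, hfdef] using hy
  have hsub : ({x₀, x₁, x₂, x} : Finset ℝ) ⊆ P.roots.toFinset := by
    intro y hy
    simp only [Finset.mem_insert, Finset.mem_singleton] at hy
    rw [Multiset.mem_toFinset]
    rcases hy with h | h | h | h <;> subst h
    · exact hroot _ hx₀
    · exact hroot _ hx₁
    · exact hroot _ hx₂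
    · exact hroot _ hx
  have hne01 : x₀ ≠ x₁ := ne_of_lt hd01
  have hne02 : x₀ ≠ x₂ := ne_of_lt (hd01.trans hd12)
  have hne12 : x₁ ≠ x₂ := ne_of_lt hd12
  have hm0 : x₀ ∉ ({x₁, x₂, x} : Finset ℝ) := by
    simp only [Finset.mem_insert, Finset.mem_singleton]
    push_neg
    exact ⟨hne01, hne02, Ne.symm hne0⟩
  have hm1 : x₁ ∉ ({x₂, x} : Finset ℝ) := by
    simp only [Finset.mem_insert, Finset.mem_singleton]
    push_neg
    exact ⟨hne12, Ne.symm hne1⟩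
  have hm2 : x₂ ∉ ({x} : Finset ℝ) := by
    simp only [Finset.mem_singleton]
    exact Ne.symm hne2
  have hcard : ({x₀, x₁, x₂, x} : Finset ℝ).card = 4 := by
    rw [Finset.card_insert_of_notMem hm0, Finset.card_insert_of_notMem hm1,
      Finset.card_insert_of_notMem hm2, Finset.card_singleton]
  have hle : ({x₀, x₁, x₂, x} : Finset ℝ).card ≤ 3 := by
    calc ({x₀, x₁, x₂, x} : Finset ℝ).card ≤ P.roots.toFinset.card :=
          Finset.card_le_card hsub
    _ ≤ Multiset.card P.roots := P.roots.toFinset_card_le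
    _ ≤ P.natDegree := P.card_roots'
    _ = 3 := hPdeg
  omega
end

section
/- Let p,q,r > 0 with p+q+r=1. Any power series solution Q(x,y) with nonnegative coefficients of (1 − p/x − q/y − rxy)Q(x,y) = q(1−1/y)Q(x,0) + p(1−1/x)Q(0,y), convergent for |x|,|y| ≤ 1, satisfies (p − rx)Q(x,1) = p·Q(0,1) for |x| ≤ 1; in particular, if Q(0,1) > 0 then r < p. -/
open scoped BigOperators

/-- Any nonnegative power-series solution of the stationary functional equation,
convergent on the closed unit polydisc, satisfies `(p − rx)·Q(x,1) = p·Q(0,1)` for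
`|x| ≤ 1`; in particular if `Q(0,1) > 0` then `r < p`. -/
theorem stationary_equation_boundary (p q r : ℝ) (hp : 0 < p) (hq : 0 < q) (hr : 0 < r)
    (hsum : p + q + r = 1)
    (c : ℕ → ℕ → ℝ) (hc : ∀ i j, 0 ≤ c i j)
    (hsummable : ∀ x y : ℝ, |x| ≤ 1 → |y| ≤ 1 →
      Summable (fun ij : ℕ × ℕ => c ij.1 ij.2 * x ^ ij.1 * y ^ ij.2))
    (Q : ℝ → ℝ → ℝ)
    (hQ : ∀ x y : ℝ, Q x y = ∑' ij : ℕ × ℕ, c ij.1 ij.2 * x ^ ij.1 * y ^ ij.2)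
    -- the functional equation `(1 − p/x − q/y − rxy) Q(x,y) = q(1−1/y)Q(x,0) + p(1−1/x)Q(0,y)`,
    -- cleared of denominators (multiplied by `xy`):
    (heq : ∀ x y : ℝ, |x| ≤ 1 → |y| ≤ 1 →
      (x * y - p * y - q * x - r * x ^ 2 * y ^ 2) * Q x y =
        q * x * (y - 1) * Q x 0 + p * y * (x - 1) * Q 0 y) :
    (∀ x : ℝ, |x| ≤ 1 → (p - r * x) * Q x 1 = p * Q 0 1) ∧
    (0 < Q 0 1 → r < p) := by
  have hcsum : Summable (fun ij : ℕ × ℕ => c ij.1 ij.2) := by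
    have := hsummable 1 1 (by norm_num) (by norm_num)
    simpa using this
  have hQ1 : ∀ x : ℝ, Q x 1 = ∑' ij : ℕ × ℕ, c ij.1 ij.2 * x ^ ij.1 := by
    intro x; rw [hQ]; simp
  set S : Set ℝ := {x : ℝ | |x| ≤ 1} with hS
  -- continuity of the one-variable series on S
  have hcont : ContinuousOn (fun x : ℝ => ∑' ij : ℕ × ℕ, c ij.1 ij.2 * x ^ ij.1) S := by
    rw [continuousOn_iff_continuous_restrict]
    exact continuous_tsum
      (fun ij => by continuity)
      hcsum
      (by
        intro ij x
        have hx : |(x : ℝ)| ≤ 1 := x.2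
        have h1 : |(x : ℝ)| ^ ij.1 ≤ 1 := pow_le_one₀ (abs_nonneg _) hx
        calc ‖c ij.1 ij.2 * (x : ℝ) ^ ij.1‖
            = c ij.1 ij.2 * |(x : ℝ)| ^ ij.1 := by
              rw [norm_mul, norm_pow, Real.norm_eq_abs, Real.norm_eq_abs,
                abs_of_nonneg (hc _ _)]
          _ ≤ c ij.1 ij.2 * 1 := by
              exact mul_le_mul_of_nonneg_left h1 (hc _ _)
          _ = c ij.1 ij.2 := mul_one _)
  -- the equation away from x = 1
  have key : ∀ x : ℝ, |x| ≤ 1 → x ≠ 1 → (p - r * x) * Q x 1 = p * Q 0 1 := by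
    intro x hx hx1
    have h := heq x 1 hx (by norm_num)
    have h2 : (x - 1) * ((p - r * x) * Q x 1 - p * Q 0 1) = 0 := by
      have hq' : q = 1 - p - r := by linarith
      linear_combination h + x * Q x 1 * hq'
    rcases mul_eq_zero.1 h2 with h3 | h3
    · exact absurd (by linarith [sub_eq_zero.1 h3]) hx1
    · linarith [sub_eq_zero.1 h3]
  -- the case x = 1 by continuity
  have hone : (p - r * 1) * Q 1 1 = p * Q 0 1 := by
    set g : ℝ → ℝ := fun x => (p - r * x) * (∑' ij : ℕ × ℕ, c ij.1 ij.2 * x ^ ij.1)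
    have hgc : ContinuousWithinAt g S 1 := by
      apply ContinuousWithinAt.mul
      · exact (continuous_const.sub (continuous_const.mul continuous_id)).continuousWithinAt
      · exact hcont.continuousWithinAt (by simp [hS])
    set u : ℕ → ℝ := fun n => 1 - 1 / (n + 1 : ℝ) with hu
    have hupos : ∀ n : ℕ, 0 < 1 / ((n : ℝ) + 1) := by
      intro n; positivity
    have hule : ∀ n : ℕ, 1 / ((n : ℝ) + 1) ≤ 1 := by
      intro n
      rw [div_le_one (by positivity)]
      have : (0:ℝ) ≤ (n:ℝ) := Nat.cast_nonneg n
      linarith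
    have huS : ∀ n, u n ∈ S := by
      intro n
      simp only [hS, Set.mem_setOf_eq, hu]
      rw [abs_le]
      constructor <;> nlinarith [hupos n, hule n]
    have hune : ∀ n, u n ≠ 1 := by
      intro n h
      have := hupos n
      simp only [hu] at h
      linarith [h]
    have hut : Filter.Tendsto u Filter.atTop (nhds 1) := by
      have h1 : Filter.Tendsto (fun n : ℕ => 1 - 1 / ((n : ℝ) + 1)) Filter.atTop
          (nhds (1 - 0)) :=
        tendsto_const_nhds.sub tendsto_one_div_add_atTop_nhds_zero_nat
      rw [show (1:ℝ) - 0 = 1 by ring] at h1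
      exact h1
    have hutS : Filter.Tendsto u Filter.atTop (nhdsWithin 1 S) :=
      tendsto_nhdsWithin_of_tendsto_nhds_of_eventually_within u hut
        (Filter.Eventually.of_forall huS)
    have hg0 : ∀ n, g (u n) = p * Q 0 1 := by
      intro n
      have := key (u n) (huS n) (hune n)
      simpa only [g, ← hQ1] using this
    have hlim : Filter.Tendsto (fun n => g (u n)) Filter.atTop (nhds (g 1)) :=
      hgc.tendsto.comp hutS
    have hlim2 : Filter.Tendsto (fun n => g (u n)) Filter.atTop (nhds (p * Q 0 1)) := by
      simp only [hg0]; exact tendsto_const_nhds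
    have := tendsto_nhds_unique hlim hlim2
    simpa only [g, ← hQ1] using this
  have main : ∀ x : ℝ, |x| ≤ 1 → (p - r * x) * Q x 1 = p * Q 0 1 := by
    intro x hx
    by_cases hx1 : x = 1
    · subst hx1; exact hone
    · exact key x hx hx1
  refine ⟨main, fun hQ01 => ?_⟩
  have hQ11 : 0 ≤ Q 1 1 := by
    rw [hQ1]
    exact tsum_nonneg (fun ij => mul_nonneg (hc _ _) (by positivity))
  have hpos : 0 < (p - r * 1) * Q 1 1 := by
    rw [hone]; exact mul_pos hp hQ01
  by_contra hcon
  push_neg at hcon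
  have : (p - r * 1) * Q 1 1 ≤ 0 :=
    mul_nonpos_of_nonpos_of_nonneg (by linarith) hQ11
  linarith
end

section
/- Let Z(t) be the unique formal power series with Z = 1 + 4pqr·t³·Z³ (p,q,r positive reals with p+q+r=1). Then the discriminant Δ(x) = (1 − t/x)² − 4pqr·t²·x admits the factorization Δ(x) = Δ₀·Δ₊(x)·Δ₋(1/x) where Δ₀ = 1/Z², Δ₊(x) = 1 − 4pqr·t²Z²·x, and Δ₋(x̄) = 1 − tZ(1+Z)x̄ + t²Z²x̄², as an identity of Laurent polynomials in x with power series coefficients in t. -/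
/-!
Multiplying `Δ₊(x)·(x² − tZ(1+Z)x + t²Z²)` out, the only terms not already of the form
`Z²·((x − t)² − 4pqr·t²x³)` carry the factor `4pqr·t³Z³`; replacing it by `Z − 1`, as the
functional equation of `Z` allows, makes them combine into exactly that form. Since `Z` has
constant term `1`, it is a unit of `ℝ[[t]]` and `Δ₀ = 1/Z²` cancels the remaining `Z²`.
-/

theorem sub_sq_sub_mul_cube_eq_mul {R : Type*} [CommRing R] {a t x Z W : R}
    (hW : W * Z ^ 2 = 1) (hZ : a * t ^ 3 * Z ^ 3 = Z - 1) :
    (x - t) ^ 2 - a * t ^ 2 * x ^ 3 =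
      W * (1 - a * t ^ 2 * Z ^ 2 * x) * (x ^ 2 - t * Z * (1 + Z) * x + t ^ 2 * Z ^ 2) := by
  have key : ((x - t) ^ 2 - a * t ^ 2 * x ^ 3) * Z ^ 2 =
      (1 - a * t ^ 2 * Z ^ 2 * x) * (x ^ 2 - t * Z * (1 + Z) * x + t ^ 2 * Z ^ 2) := by
    linear_combination (t * Z * x - (1 + Z) * x ^ 2) * hZ
  linear_combination (-((x - t) ^ 2 - a * t ^ 2 * x ^ 3)) * hW + W * key

theorem discriminant_factorization_general (p q r : ℝ) (Z : PowerSeries ℝ)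
    (hZ : Z = 1 + PowerSeries.C (R := ℝ) (4 * p * q * r) * PowerSeries.X ^ 3 * Z ^ 3) :
    (Polynomial.X - Polynomial.C (PowerSeries.X : PowerSeries ℝ)) ^ 2 -
        Polynomial.C (PowerSeries.C (R := ℝ) (4 * p * q * r) * PowerSeries.X ^ 2) * Polynomial.X ^ 3 =
      Polynomial.C ((Z ^ 2)⁻¹) *
        (1 - Polynomial.C (PowerSeries.C (R := ℝ) (4 * p * q * r) * PowerSeries.X ^ 2 * Z ^ 2) *
          Polynomial.X) *
        (Polynomial.X ^ 2 -
          Polynomial.C (PowerSeries.X * Z * (1 + Z)) * Polynomial.X +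
          Polynomial.C (PowerSeries.X ^ 2 * Z ^ 2)) := by
  have hZ₀ : PowerSeries.constantCoeff Z = 1 := by
    conv_lhs => rw [hZ]
    simp
  have hW : (Z ^ 2)⁻¹ * Z ^ 2 = 1 := PowerSeries.inv_mul_cancel _ (by simp [hZ₀])
  have hcubic : PowerSeries.C (R := ℝ) (4 * p * q * r) * PowerSeries.X ^ 3 * Z ^ 3 = Z - 1 :=
    eq_sub_of_add_eq' hZ.symm
  simp only [Polynomial.C_mul, Polynomial.C_pow, Polynomial.C_add, Polynomial.C_1]
  refine sub_sq_sub_mul_cube_eq_mul ?_ ?_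
  · rw [← Polynomial.C_pow, ← Polynomial.C_mul, hW, Polynomial.C_1]
  · rw [← Polynomial.C_pow, ← Polynomial.C_pow, ← Polynomial.C_mul, ← Polynomial.C_mul, hcubic,
      Polynomial.C_sub, Polynomial.C_1]

/-- Canonical factorization of the discriminant `Δ(x) = (1 − t/x)² − 4pqr·t²·x`:
`Δ(x) = Δ₀·Δ₊(x)·Δ₋(1/x)` with `Δ₀ = 1/Z²`, `Δ₊(x) = 1 − 4pqr·t²Z²·x` and
`Δ₋(x̄) = 1 − tZ(1+Z)x̄ + t²Z²x̄²`, where `Z = 1 + 4pqr·t³·Z³`.  The identity of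
Laurent polynomials in `x` is stated after multiplication by `x²`:
`(x−t)² − 4pqr·t²·x³ = Δ₀ · Δ₊(x) · (x² − tZ(1+Z)·x + t²Z²)`. -/
theorem discriminant_factorization (p q r : ℝ) (hp : 0 < p) (hq : 0 < q) (hr : 0 < r)
    (hsum : p + q + r = 1) (Z : PowerSeries ℝ)
    (hZ : Z = 1 + PowerSeries.C (R := ℝ) (4 * p * q * r) * PowerSeries.X ^ 3 * Z ^ 3) :
    (Polynomial.X - Polynomial.C (PowerSeries.X : PowerSeries ℝ)) ^ 2 -
        Polynomial.C (PowerSeries.C (R := ℝ) (4 * p * q * r) * PowerSeries.X ^ 2) * Polynomial.X ^ 3 =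
      Polynomial.C ((Z ^ 2)⁻¹) *
        (1 - Polynomial.C (PowerSeries.C (R := ℝ) (4 * p * q * r) * PowerSeries.X ^ 2 * Z ^ 2) *
          Polynomial.X) *
        (Polynomial.X ^ 2 -
          Polynomial.C (PowerSeries.X * Z * (1 + Z)) * Polynomial.X +
          Polynomial.C (PowerSeries.X ^ 2 * Z ^ 2)) :=
  discriminant_factorization_general p q r Z hZ
end

section
/- Let f(z) = pqr·z³ − z + 2 with p,q,r > 0, p+q+r=1 and r < min(p,q). Then f has exactly two roots greater than 2; calling them v₁ < v₂, one has 1/max(p,q) ≤ v₁ ≤ 1/min(p,q) < v₂ < 1/r. -/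
set_option maxHeartbeats 4000000 in
/-- The cubic `f(z) = pqr·z³ − z + 2` has exactly two roots greater than `2`, say
`v₁ < v₂`, and they satisfy `1/max(p,q) ≤ v₁ ≤ 1/min(p,q) < v₂ < 1/r`. -/
theorem cubic_two_roots (p q r : ℝ) (hp : 0 < p) (hq : 0 < q) (hr : 0 < r)
    (hsum : p + q + r = 1) (hmin : r < min p q) :
    ∃ v₁ v₂ : ℝ, 2 < v₁ ∧ v₁ < v₂ ∧
      p * q * r * v₁ ^ 3 - v₁ + 2 = 0 ∧
      p * q * r * v₂ ^ 3 - v₂ + 2 = 0 ∧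
      (∀ z : ℝ, 2 < z → p * q * r * z ^ 3 - z + 2 = 0 → z = v₁ ∨ z = v₂) ∧
      1 / max p q ≤ v₁ ∧ v₁ ≤ 1 / min p q ∧ 1 / min p q < v₂ ∧ v₂ < 1 / r := by
  set a := p * q * r with ha_def
  have ha : 0 < a := by positivity
  set m := min p q with hm_def
  set M := max p q with hM_def
  have hm : 0 < m := lt_min hp hq
  have hrm : r < m := hmin
  have hmM : m ≤ M := min_le_max
  have hMs : m + M = p + q := min_add_max p q
  have hMp : m * M = p * q := min_mul_max p q
  have hM : 0 < M := lt_of_lt_of_le hm hmM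
  have hsum' : m + M + r = 1 := by linarith
  have hr3 : r < 1/3 := by nlinarith
  have hM3 : 1/3 < M := by nlinarith
  have ham : a = m * M * r := by rw [ha_def, ← hMp]
  have ha27 : a < 1/27 := by
    rw [ham]
    nlinarith [sq_nonneg (m - M), sq_nonneg (m + M - 2/3), sq_nonneg (3*r - 1),
      mul_pos hm hM, sq_nonneg (m*M - 1/9)]
  -- point where f is negative
  set c := Real.sqrt (1 / (3*a)) with hc_def
  have hc2 : c ^ 2 = 1 / (3*a) := Real.sq_sqrt (by positivity)
  have hc0 : 0 ≤ c := Real.sqrt_nonneg _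
  have hc3 : 3 < c := by
    have h9 : (3:ℝ)^2 < c^2 := by
      rw [hc2, lt_div_iff₀ (by positivity)]
      nlinarith
    exact lt_of_pow_lt_pow_left₀ 2 hc0 h9
  have hac3 : a * c ^ 3 = c / 3 := by
    have h : c ^ 3 = c ^ 2 * c := by ring
    rw [h, hc2]; field_simp
  have hfc : a * c ^ 3 - c + 2 < 0 := by rw [hac3]; linarith
  -- ordering facts
  have hm2 : 2 < 1/m := by rw [lt_div_iff₀ hm]; nlinarith
  have h3mM : r < 3 * (m*M) := by
    nlinarith [mul_pos (sub_pos.2 (lt_of_lt_of_le hrm hmM)) (sub_pos.2 hrm),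
      mul_pos hr (show (0:ℝ) < 2 - 6*r by linarith)]
  have hMc : 1/M < c := by
    have h1 : (1/M)^2 < c^2 := by
      rw [hc2, div_pow, one_pow, div_lt_div_iff₀ (by positivity) (by positivity)]
      have h2 : 3 * a < M^2 := by rw [ham]; nlinarith [mul_pos hm hM]
      nlinarith
    exact lt_of_pow_lt_pow_left₀ 2 hc0 h1
  have hcr : c < 1/r := by
    have h1 : c^2 < (1/r)^2 := by
      rw [hc2, div_pow, one_pow, div_lt_div_iff₀ (by positivity) (by positivity)]
      have h2 : r^2 < 3 * a := by rw [ham]; nlinarith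
      nlinarith
    exact lt_of_pow_lt_pow_left₀ 2 (by positivity) h1
  have hmr : 1/m < 1/r := by rw [div_lt_div_iff₀ hm hr]; nlinarith
  have hMm : 1/M ≤ 1/m := by rw [div_le_div_iff₀ hM hm]; nlinarith
  -- values of f at special points
  have hfm_eq : ∀ x : ℝ, 0 < x → a * (1/x)^3 - 1/x + 2 = (a - x^2 + 2*x^3) / x^3 := by
    intro x hx; field_simp
  have hfm : a * (1/m)^3 - 1/m + 2 ≤ 0 := by
    rw [hfm_eq m hm]
    have hfac : a - m^2 + 2*m^3 = m*(m-M)*(m-r) := by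
      rw [ham]; linear_combination m^2 * hsum'
    have h : m*(m-M)*(m-r) ≤ 0 := by
      nlinarith [mul_nonneg (mul_nonneg hm.le (sub_nonneg.2 hmM)) (sub_nonneg.2 hrm.le)]
    exact div_nonpos_of_nonpos_of_nonneg (by linarith) (by positivity)
  have hfM : 0 ≤ a * (1/M)^3 - 1/M + 2 := by
    rw [hfm_eq M hM]
    have hfac : a - M^2 + 2*M^3 = M*(M-m)*(M-r) := by
      rw [ham]; linear_combination M^2 * hsum'
    have h : 0 ≤ M*(M-m)*(M-r) :=
      mul_nonneg (mul_nonneg hM.le (by linarith)) (by linarith [lt_of_lt_of_le hrm hmM])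
    exact div_nonneg (by linarith) (by positivity)
  have hfr : 0 < a * (1/r)^3 - 1/r + 2 := by
    rw [hfm_eq r hr]
    have hfac : a - r^2 + 2*r^3 = r*(r-m)*(r-M) := by
      rw [ham]; linear_combination r^2 * hsum'
    have h : 0 < r*(r-m)*(r-M) := by
      nlinarith [mul_pos (mul_pos hr (sub_pos.2 hrm)) (sub_pos.2 (lt_of_lt_of_le hrm hmM))]
    exact div_pos (by linarith) (by positivity)
  -- IVT setup
  set f : ℝ → ℝ := fun z => a * z^3 - z + 2 with hf_def
  have hcont : Continuous f := by fun_prop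
  have hfx₁ : 0 ≤ f (max 2 (1/M)) := by
    rcases max_cases 2 (1/M) with ⟨h,_⟩|⟨h,_⟩ <;> rw [h]
    · show (0:ℝ) ≤ a * 2^3 - 2 + 2; nlinarith
    · exact hfM
  have hfd : f (min c (1/m)) ≤ 0 := by
    rcases min_cases c (1/m) with ⟨h,_⟩|⟨h,_⟩ <;> rw [h]
    · exact hfc.le
    · exact hfm
  have hfc' : f (max c (1/m)) < 0 := by
    rcases max_cases c (1/m) with ⟨h,_⟩|⟨h,h2⟩ <;> rw [h]
    · exact hfc
    · -- here c < 1/m, which forces m < M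
      have hmlt : m < M := by
        by_contra hcon
        push_neg at hcon
        have hMeq : M = m := le_antisymm hcon hmM
        have h4 : c^2 < (1/m)^2 := by nlinarith [hm2]
        rw [hc2] at h4
        have h5 : m^2 < 3*a := by
          rw [div_pow, one_pow, div_lt_div_iff₀ (by positivity) (by positivity)] at h4
          nlinarith
        rw [ham, hMeq] at h5
        nlinarith
      show a * (1/m)^3 - 1/m + 2 < 0
      rw [hfm_eq m hm]
      have hfac : a - m^2 + 2*m^3 = m*(m-M)*(m-r) := by
        rw [ham]; linear_combination m^2 * hsum'
      have hneg : m*(m-M)*(m-r) < 0 := by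
        nlinarith [mul_pos (mul_pos hm (sub_pos.2 hmlt)) (sub_pos.2 hrm)]
      exact div_neg_of_neg_of_pos (by linarith) (by positivity)
  have hab1 : max 2 (1/M) ≤ min c (1/m) :=
    max_le (le_min (by linarith) hm2.le) (le_min hMc.le hMm)
  obtain ⟨v₁, hv₁mem, hv₁⟩ := intermediate_value_Icc' hab1 hcont.continuousOn ⟨hfd, hfx₁⟩
  have hab2 : max c (1/m) ≤ 1/r := max_le hcr.le hmr.le
  obtain ⟨v₂, hv₂mem, hv₂⟩ := intermediate_value_Icc hab2 hcont.continuousOn ⟨hfc'.le, hfr.le⟩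
  obtain ⟨hv₁l, hv₁u⟩ := hv₁mem
  obtain ⟨hv₂l, hv₂u⟩ := hv₂mem
  simp only [hf_def] at hv₁ hv₂
  have e1 : a * v₁ ^ 3 - v₁ + 2 = 0 := hv₁
  have e2 : a * v₂ ^ 3 - v₂ + 2 = 0 := hv₂
  have h2v₁ : 2 < v₁ := by
    have hle : 2 ≤ v₁ := le_trans (le_max_left 2 (1/M)) hv₁l
    rcases eq_or_lt_of_le hle with h|h
    · exfalso; rw [← h] at e1; nlinarith
    · exact h
  have hv₂c' : max c (1/m) < v₂ := by
    rcases eq_or_lt_of_le hv₂l with h|h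
    · exfalso; rw [← h] at hv₂; linarith [hfc', hv₂.le, hv₂.ge]
    · exact h
  have hv₂r : v₂ < 1/r := by
    rcases eq_or_lt_of_le hv₂u with h|h
    · exfalso; rw [h] at e2; linarith
    · exact h
  have hv₁v₂ : v₁ < v₂ := lt_of_le_of_lt (hv₁u.trans min_le_max) hv₂c'
  have hv₁m : v₁ ≤ 1/m := hv₁u.trans (min_le_right _ _)
  have hv₂m : 1/m < v₂ := lt_of_le_of_lt (le_max_right c (1/m)) hv₂c'
  have h2v₂ : 2 < v₂ := lt_trans hm2 hv₂m
  have hne : v₁ ≠ v₂ := ne_of_lt hv₁v₂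
  have h1 : a * (v₁^2 + v₁*v₂ + v₂^2) = 1 := by
    have hfactor : (v₁ - v₂) * (a*(v₁^2 + v₁*v₂ + v₂^2) - 1) = 0 := by
      linear_combination e1 - e2
    rcases mul_eq_zero.1 hfactor with h|h
    · exact absurd (sub_eq_zero.1 h) hne
    · linarith
  have h2 : a * (v₁*v₂) * (v₁+v₂) = 2 := by linear_combination v₁ * h1 - e1
  refine ⟨v₁, v₂, h2v₁, hv₁v₂, e1, e2, ?_, le_trans (le_max_right 2 (1/M)) hv₁l,
    hv₁m, hv₂m, hv₂r⟩
  intro z hz hfz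
  have key : a * ((z - v₁)*(z - v₂)) * (z + v₁ + v₂) = 0 := by
    linear_combination hfz - z * h1 + h2
  have hz3 : z + v₁ + v₂ ≠ 0 := ne_of_gt (by linarith)
  rcases mul_eq_zero.1 key with h|h
  · rcases mul_eq_zero.1 h with h'|h'
    · exact absurd h' (ne_of_gt ha)
    · rcases mul_eq_zero.1 h' with h''|h''
      · exact Or.inl (sub_eq_zero.1 h'')
      · exact Or.inr (sub_eq_zero.1 h'')
  · exact absurd h hz3
end
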